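/- arXiv:math/0505089 — 5 statements merged into one kernel-verified Lean document; each statement's English description precedes it below -/
import Mathlib

section
/- Let Φ(u) = sup_{w∈ℝ} { u·w − w²·cosh(w) } be the Legendre transform of w ↦ w²·cosh(w). Then for every u ≥ 0, Φ(u) ≥ (u/2)·log(u/(4e)). -/
/-- The Legendre transform of `w ↦ w² cosh w`. -/
noncomputable def Phi (u : ℝ) : ℝ :=
  sSup {y : ℝ | ∃ w : ℝ, y = u * w - w ^ 2 * Real.cosh w}

lemma phi_bddAbove (u : ℝ) :
    BddAbove {y : ℝ | ∃ w : ℝ, y = u * w - w ^ 2 * Real.cosh w} := by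
  refine ⟨u ^ 2 / 4, ?_⟩
  rintro y ⟨w, rfl⟩
  have h1 : (1 : ℝ) ≤ Real.cosh w := Real.one_le_cosh w
  have h2 : w ^ 2 ≤ w ^ 2 * Real.cosh w := by nlinarith [sq_nonneg w]
  nlinarith [sq_nonneg (w - u / 2)]

lemma sq_le_two_exp (x : ℝ) (hx : 0 ≤ x) : x ^ 2 ≤ 2 * Real.exp x := by
  have h3 : (1 + x / 3) ^ 3 ≤ (Real.exp (x / 3)) ^ 3 := by
    apply pow_le_pow_left₀ (by linarith) _ 3
    linarith [Real.add_one_le_exp (x / 3)]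
  have he : (Real.exp (x / 3)) ^ 3 = Real.exp x := by
    rw [← Real.exp_nat_mul]; norm_num; ring_nf
  nlinarith [he ▸ h3, sq_nonneg x, sq_nonneg (x - 6)]

lemma cosh_bound (x : ℝ) (hx : 0 ≤ x) :
    x ^ 2 * Real.cosh x ≤ 2 * Real.exp (2 * x) := by
  have h1 : Real.cosh x ≤ Real.exp x := by
    rw [Real.cosh_eq]
    have : Real.exp (-x) ≤ Real.exp x := Real.exp_le_exp.2 (by linarith)
    linarith
  have h2 : x ^ 2 * Real.cosh x ≤ x ^ 2 * Real.exp x :=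
    mul_le_mul_of_nonneg_left h1 (sq_nonneg x)
  have h3 : x ^ 2 * Real.exp x ≤ 2 * Real.exp x * Real.exp x :=
    mul_le_mul_of_nonneg_right (sq_le_two_exp x hx) (Real.exp_pos x).le
  calc x ^ 2 * Real.cosh x ≤ 2 * Real.exp x * Real.exp x := h2.trans h3
    _ = 2 * Real.exp (2 * x) := by rw [show (2:ℝ) * x = x + x by ring, Real.exp_add]; ring

theorem phi_lower_bound (u : ℝ) (hu : 0 ≤ u) :
    (u / 2) * Real.log (u / (4 * Real.exp 1)) ≤ Phi u := by
  have hbdd := phi_bddAbove u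
  rw [Phi]
  rcases le_or_gt u 4 with h4 | h4
  · -- small u : left side ≤ 0 ≤ Phi u
    have hmem : (0 : ℝ) ∈ {y : ℝ | ∃ w : ℝ, y = u * w - w ^ 2 * Real.cosh w} :=
      ⟨0, by simp⟩
    have hPhi : (0 : ℝ) ≤ Phi u := le_csSup hbdd hmem
    rw [Phi] at hPhi
    have hlog : Real.log (u / (4 * Real.exp 1)) ≤ 0 := by
      apply Real.log_nonpos
      · positivity
      · rw [div_le_one (by positivity)]
        nlinarith [Real.exp_one_gt_d9]
    nlinarith
  · -- u > 4
    set w : ℝ := Real.log (u / 4) / 2 with hw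
    have hu4 : (1 : ℝ) ≤ u / 4 := by linarith
    have hwpos : 0 ≤ w := by
      have := Real.log_nonneg hu4
      positivity
    have hmem : u * w - w ^ 2 * Real.cosh w ∈
        {y : ℝ | ∃ w : ℝ, y = u * w - w ^ 2 * Real.cosh w} := ⟨w, rfl⟩
    have hPhi := le_csSup hbdd hmem
    have hexp : Real.exp (2 * w) = u / 4 := by
      rw [hw]; rw [show 2 * (Real.log (u / 4) / 2) = Real.log (u / 4) by ring]
      exact Real.exp_log (by linarith)
    have hcb := cosh_bound w hwpos
    rw [hexp] at hcb
    have hlog : Real.log (u / (4 * Real.exp 1)) = Real.log (u / 4) - 1 := by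
      rw [show u / (4 * Real.exp 1) = (u / 4) / Real.exp 1 by ring,
        Real.log_div (by linarith) (Real.exp_ne_zero 1), Real.log_exp]
    rw [hlog]
    have : (u / 2) * (Real.log (u / 4) - 1) ≤ u * w - w ^ 2 * Real.cosh w := by
      have : u * w = u / 2 * Real.log (u / 4) := by rw [hw]; ring
      nlinarith
    linarith
end

section
/- The function Φ(u) = sup_{w∈ℝ} { u·w − w²·cosh(w) } satisfies Φ(u) ~ u²/4 as u → 0; more precisely, lim_{u→0} Φ(u)/u² = 1/4. -/
lemma phi_upper (u : ℝ) : Phi u ≤ u ^ 2 / 4 := by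
  apply Real.sSup_le
  · rintro y ⟨w, rfl⟩
    nlinarith [Real.one_le_cosh w, sq_nonneg w, sq_nonneg (w - u / 2)]
  · positivity

lemma phi_lower (u : ℝ) : u ^ 2 / 2 - u ^ 2 / 4 * Real.cosh (u / 2) ≤ Phi u := by
  have hbdd : BddAbove {y : ℝ | ∃ w : ℝ, y = u * w - w ^ 2 * Real.cosh w} := by
    refine ⟨u ^ 2 / 4, ?_⟩
    rintro y ⟨w, rfl⟩
    nlinarith [Real.one_le_cosh w, sq_nonneg w, sq_nonneg (w - u / 2)]
  have hmem : u * (u / 2) - (u / 2) ^ 2 * Real.cosh (u / 2) ∈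
      {y : ℝ | ∃ w : ℝ, y = u * w - w ^ 2 * Real.cosh w} := ⟨u / 2, rfl⟩
  have h := le_csSup hbdd hmem
  have heq : u * (u / 2) - (u / 2) ^ 2 * Real.cosh (u / 2)
      = u ^ 2 / 2 - u ^ 2 / 4 * Real.cosh (u / 2) := by ring
  rw [heq] at h
  exact h

theorem phi_asymptotic_at_zero :
    Filter.Tendsto (fun u : ℝ => Phi u / u ^ 2) (nhdsWithin 0 {0}ᶜ)
      (nhds (1 / 4)) := by
  have hg : Filter.Tendsto (fun u : ℝ => 1 / 2 - Real.cosh (u / 2) / 4)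
      (nhdsWithin 0 {0}ᶜ) (nhds (1 / 4)) := by
    have : Filter.Tendsto (fun u : ℝ => 1 / 2 - Real.cosh (u / 2) / 4)
        (nhds 0) (nhds (1 / 2 - Real.cosh (0 / 2) / 4)) := by
      apply Filter.Tendsto.sub tendsto_const_nhds
      apply Filter.Tendsto.div_const
      exact (Real.continuous_cosh.tendsto _).comp ((Filter.tendsto_id (α := ℝ)).div_const 2)
    have h2 : (1:ℝ)/2 - Real.cosh (0/2) / 4 = 1/4 := by norm_num [Real.cosh_zero]
    rw [h2] at this
    exact this.mono_left nhdsWithin_le_nhds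
  apply tendsto_of_tendsto_of_tendsto_of_le_of_le' hg tendsto_const_nhds
  · filter_upwards [self_mem_nhdsWithin] with u hu
    have hu2 : (0 : ℝ) < u ^ 2 := by have : u ≠ 0 := hu; positivity
    rw [le_div_iff₀ hu2]
    have := phi_lower u
    nlinarith
  · filter_upwards [self_mem_nhdsWithin] with u hu
    have hu2 : (0 : ℝ) < u ^ 2 := by have : u ≠ 0 := hu; positivity
    rw [div_le_iff₀ hu2]
    have := phi_upper u
    nlinarith
end

section
/- Suppose logarithmic Sobolev inequalities hold for two finite-state reversible Markov generators with constants C₁ and C₂: Entᵢ(f) ≤ Cᵢ·Dᵢ(√f) for densities f on state spaces X₁, X₂. Then the product chain on X₁ × X₂ (independent superposition) satisfies a log-Sobolev inequality with constant max(C₁, C₂): Ent(f) ≤ max(C₁,C₂)·(D₁ ⊕ D₂)(√f), where (D₁ ⊕ D₂) applies D₁ in the first coordinate averaged over the second plus D₂ in the second averaged over the first. -/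
/-!
Write `g x = ∑ y, μ₂ y * F (x, y)` for the first marginal of `F`. Applying the second inequality,
in its homogeneous form `∑ μ f log f ≤ m log m + C D(√f)` with `m = ∑ μ f`, to each slice
`F (x, ·)` bounds `∑ μ₁ μ₂ F log F` by `∑ μ₁ g log g` plus `C₂` times the second Dirichlet term;
the first inequality bounds `∑ μ₁ g log g` by `C₁ D₁(√g)`. Finally `√g x` is the weighted `L²` norm
of `y ↦ √F (x, y)`, so the triangle inequality gives `D₁(√g) ≤ ∑ y, μ₂ y * D₁(√F (·, y))`.

Negative constants are allowed: since entropy and Dirichlet forms are nonnegative, an inequality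
with `C < 0` forces every off-diagonal rate `μ x * q x y` to vanish, so `C` may be replaced by
`max C 0`.
-/

open Finset Real

section

variable {ι κ : Type*} [Fintype ι] [Fintype κ]

def dirichletForm (μ : ι → ℝ) (q : ι → ι → ℝ) (h : ι → ℝ) : ℝ :=
  ∑ x, ∑ y, μ x * q x y * (h y - h x) ^ 2

def LogSobolev (μ : ι → ℝ) (q : ι → ι → ℝ) (C : ℝ) : Prop :=
  ∀ f : ι → ℝ, (∀ x, 0 ≤ f x) → ∑ x, μ x * f x = 1 →
    ∑ x, μ x * (f x * log (f x)) ≤ C * dirichletForm μ q (fun x => √(f x))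

lemma mul_mul_log_mul (a b : ℝ) : a * b * log (a * b) = b * (a * log a) + a * (b * log b) := by
  have := negMulLog_mul a b
  simp only [negMulLog] at this
  linarith

lemma sqrt_sum_mul_sub_sqrt_sum_mul_sq_le (w a b : κ → ℝ) (hw : ∀ k, 0 ≤ w k)
    (ha : ∀ k, 0 ≤ a k) (hb : ∀ k, 0 ≤ b k) :
    (√(∑ k, w k * a k) - √(∑ k, w k * b k)) ^ 2 ≤ ∑ k, w k * (√(a k) - √(b k)) ^ 2 := by
  have hA : 0 ≤ ∑ k, w k * a k := sum_nonneg fun k _ => mul_nonneg (hw k) (ha k)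
  have hB : 0 ≤ ∑ k, w k * b k := sum_nonneg fun k _ => mul_nonneg (hw k) (hb k)
  have cauchySchwarz : ∑ k, w k * (√(a k) * √(b k)) ≤ √(∑ k, w k * a k) * √(∑ k, w k * b k) := by
    convert sum_sqrt_mul_sqrt_le univ (fun k => mul_nonneg (hw k) (ha k))
      (fun k => mul_nonneg (hw k) (hb k)) using 2 with k
    rw [sqrt_mul (hw k), sqrt_mul (hw k), mul_mul_mul_comm, mul_self_sqrt (hw k)]
  have hexpand : ∀ k, w k * (√(a k) - √(b k)) ^ 2
      = w k * a k + w k * b k - 2 * (w k * (√(a k) * √(b k))) := fun k => by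
    rw [sub_sq, sq_sqrt (ha k), sq_sqrt (hb k)]; ring
  rw [sub_sq, sq_sqrt hA, sq_sqrt hB, sum_congr rfl fun k _ => hexpand k, sum_sub_distrib,
    sum_add_distrib, ← mul_sum]
  linarith

variable {μ : ι → ℝ} {q : ι → ι → ℝ} {C : ℝ}

lemma dirichletForm_nonneg (hμ : ∀ x, 0 ≤ μ x) (hq : ∀ x y, 0 ≤ q x y) (h : ι → ℝ) :
    0 ≤ dirichletForm μ q h :=
  sum_nonneg fun x _ => sum_nonneg fun y _ => mul_nonneg (mul_nonneg (hμ x) (hq x y)) (sq_nonneg _)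

lemma dirichletForm_const_mul (c : ℝ) (h : ι → ℝ) :
    dirichletForm μ q (fun x => c * h x) = c ^ 2 * dirichletForm μ q h := by
  simp only [dirichletForm, mul_sum]
  exact sum_congr rfl fun x _ => sum_congr rfl fun y _ => by ring

lemma dirichletForm_eq_zero_of_offDiag (hq : ∀ x y, x ≠ y → μ x * q x y = 0) (h : ι → ℝ) :
    dirichletForm μ q h = 0 :=
  sum_eq_zero fun x _ => sum_eq_zero fun y _ => by
    rcases eq_or_ne x y with rfl | hxy
    · simp
    · rw [hq x y hxy, zero_mul]

lemma dirichletForm_sqrt_sum_mul_le (hμ : ∀ x, 0 ≤ μ x) (hq : ∀ x y, 0 ≤ q x y)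
    {w : κ → ℝ} (hw : ∀ k, 0 ≤ w k) {H : ι → κ → ℝ} (hH : ∀ x k, 0 ≤ H x k) :
    dirichletForm μ q (fun x => √(∑ k, w k * H x k))
      ≤ ∑ k, w k * dirichletForm μ q (fun x => √(H x k)) :=
  calc dirichletForm μ q (fun x => √(∑ k, w k * H x k))
      ≤ ∑ x, ∑ y, μ x * q x y * ∑ k, w k * (√(H y k) - √(H x k)) ^ 2 :=
        sum_le_sum fun x _ => sum_le_sum fun y _ => mul_le_mul_of_nonneg_left
          (sqrt_sum_mul_sub_sqrt_sum_mul_sq_le w _ _ hw (hH y) (hH x))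
          (mul_nonneg (hμ x) (hq x y))
    _ = ∑ k, w k * dirichletForm μ q (fun x => √(H x k)) := by
        simp only [dirichletForm, mul_sum]
        refine (sum_congr rfl fun x _ => sum_comm).trans (sum_comm.trans ?_)
        exact sum_congr rfl fun k _ => sum_congr rfl fun x _ => sum_congr rfl fun y _ => by ring

lemma sum_mul_log_nonneg (hμ : ∀ x, 0 ≤ μ x) (hμs : ∑ x, μ x = 1) {f : ι → ℝ}
    (hf : ∀ x, 0 ≤ f x) (hfs : ∑ x, μ x * f x = 1) : 0 ≤ ∑ x, μ x * (f x * log (f x)) :=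
  calc 0 = ∑ x, μ x * (f x - 1) := by simp only [mul_sub, mul_one, sum_sub_distrib, hfs, hμs, sub_self]
    _ ≤ _ := sum_le_sum fun x _ =>
      mul_le_mul_of_nonneg_left (self_sub_one_le_mul_log (hf x)) (hμ x)

namespace LogSobolev

lemma mono {C' : ℝ} (hLS : LogSobolev μ q C) (hμ : ∀ x, 0 ≤ μ x) (hq : ∀ x y, 0 ≤ q x y) (hC : C ≤ C') :
    LogSobolev μ q C' := fun f hf hfs =>
  (hLS f hf hfs).trans (mul_le_mul_of_nonneg_right hC (dirichletForm_nonneg hμ hq _))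

lemma mul_rate_eq_zero_of_neg (hLS : LogSobolev μ q C) (hμ : ∀ x, 0 ≤ μ x)
    (hμs : ∑ x, μ x = 1) (hq : ∀ x y, 0 ≤ q x y) (hC : C < 0) {x y : ι} (hxy : x ≠ y) :
    μ x * q x y = 0 := by
  classical
  set s := 1 + 3 * μ y
  have hs : 0 < s := by have := hμ y; positivity
  -- a density with `f y = 4 * f x`, so the `(x, y)` term of `D(√f)` is `μ x * q x y * f x`
  set f : ι → ℝ := fun z => (1 + 3 * if z = y then 1 else 0) / s
  have hf : ∀ z, 0 ≤ f z := fun z => by positivity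
  have hfs : ∑ z, μ z * f z = 1 := by
    simp only [f, mul_div_assoc', ← sum_div, mul_add, mul_one, sum_add_distrib, hμs, mul_ite,
      mul_zero, sum_ite_eq', mem_univ, if_true]
    rw [mul_comm, div_self hs.ne']
  have hD : dirichletForm μ q (fun z => √(f z)) = 0 :=
    le_antisymm
      (nonpos_of_mul_nonneg_right ((sum_mul_log_nonneg hμ hμs hf hfs).trans (hLS f hf hfs)) hC)
      (dirichletForm_nonneg hμ hq _)
  have hterm : μ x * q x y * (√(f y) - √(f x)) ^ 2 = 0 := by
    have hnn : ∀ a b, 0 ≤ μ a * q a b * (√(f b) - √(f a)) ^ 2 := fun a b =>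
      mul_nonneg (mul_nonneg (hμ a) (hq a b)) (sq_nonneg _)
    have hrow := (sum_eq_zero_iff_of_nonneg fun a _ => sum_nonneg fun b _ => hnn a b).mp hD x
      (mem_univ x)
    exact (sum_eq_zero_iff_of_nonneg fun b _ => hnn x b).mp hrow y (mem_univ y)
  have hne : √(f y) - √(f x) ≠ 0 := by
    rw [sub_ne_zero, Ne, sqrt_inj (hf y) (hf x)]
    norm_num [f, hxy, div_eq_mul_inv, hs.ne']
  simpa [hne] using hterm

lemma max_zero_mul_sum_dirichletForm (hLS : LogSobolev μ q C) (hμ : ∀ x, 0 ≤ μ x)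
    (hμs : ∑ x, μ x = 1) (hq : ∀ x y, 0 ≤ q x y) (w : κ → ℝ) (h : κ → ι → ℝ) :
    max C 0 * ∑ k, w k * dirichletForm μ q (h k) = C * ∑ k, w k * dirichletForm μ q (h k) := by
  rcases le_or_gt 0 C with hC | hC
  · rw [max_eq_left hC]
  · simp [dirichletForm_eq_zero_of_offDiag fun x y => hLS.mul_rate_eq_zero_of_neg hμ hμs hq hC]

lemma sum_mul_log_le (hLS : LogSobolev μ q C) (hμ : ∀ x, 0 ≤ μ x) (hq : ∀ x y, 0 ≤ q x y)
    (hC : 0 ≤ C) {f : ι → ℝ} (hf : ∀ x, 0 ≤ f x) :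
    ∑ x, μ x * (f x * log (f x)) ≤ (∑ x, μ x * f x) * log (∑ x, μ x * f x)
      + C * dirichletForm μ q (fun x => √(f x)) := by
  set m := ∑ x, μ x * f x
  have hm : 0 ≤ m := sum_nonneg fun x _ => mul_nonneg (hμ x) (hf x)
  rcases hm.eq_or_lt with hm0 | hmpos
  · have hzero : ∀ x, μ x * f x = 0 := fun x =>
      (sum_eq_zero_iff_of_nonneg fun x _ => mul_nonneg (hμ x) (hf x)).mp hm0.symm x (mem_univ x)
    have hlhs : ∑ x, μ x * (f x * log (f x)) = 0 :=
      sum_eq_zero fun x _ => by rw [← mul_assoc, hzero x, zero_mul]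
    rw [hlhs, ← hm0, zero_mul, zero_add]
    exact mul_nonneg hC (dirichletForm_nonneg hμ hq _)
  · have key := hLS (fun x => m⁻¹ * f x) (fun x => by have := hf x; positivity)
      (by simp only [mul_left_comm _ m⁻¹, ← mul_sum]; exact inv_mul_cancel₀ hmpos.ne')
    simp only [sqrt_mul (inv_nonneg.mpr hm), dirichletForm_const_mul, sq_sqrt (inv_nonneg.mpr hm),
      mul_mul_log_mul] at key
    have hlhs : ∑ x, μ x * (f x * (m⁻¹ * log m⁻¹) + m⁻¹ * (f x * log (f x)))
        = m⁻¹ * (∑ x, μ x * (f x * log (f x)) - m * log m) := by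
      have hsplit : ∀ x, μ x * (f x * (m⁻¹ * log m⁻¹) + m⁻¹ * (f x * log (f x)))
          = μ x * f x * (m⁻¹ * log m⁻¹) + m⁻¹ * (μ x * (f x * log (f x))) := fun x => by ring
      rw [sum_congr rfl fun x _ => hsplit x, sum_add_distrib, ← sum_mul, ← mul_sum, log_inv]
      field_simp
      ring
    rw [hlhs, mul_left_comm] at key
    linarith [le_of_mul_le_mul_left key (inv_pos.mpr hmpos)]

section Product

variable {μ₁ : ι → ℝ} {μ₂ : κ → ℝ} {q₁ : ι → ι → ℝ} {q₂ : κ → κ → ℝ} {C₁ C₂ : ℝ}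
  {F : ι × κ → ℝ}

theorem tensorization_of_nonneg (h₁ : LogSobolev μ₁ q₁ C₁) (h₂ : LogSobolev μ₂ q₂ C₂)
    (hμ₁ : ∀ x, 0 ≤ μ₁ x) (hμ₂ : ∀ y, 0 ≤ μ₂ y) (hq₁ : ∀ x x', 0 ≤ q₁ x x')
    (hq₂ : ∀ y y', 0 ≤ q₂ y y') (hC₁ : 0 ≤ C₁) (hC₂ : 0 ≤ C₂) (hF : ∀ p, 0 ≤ F p)
    (hFs : ∑ x, ∑ y, μ₁ x * μ₂ y * F (x, y) = 1) :
    ∑ x, ∑ y, μ₁ x * μ₂ y * (F (x, y) * log (F (x, y)))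
      ≤ C₁ * ∑ y, μ₂ y * dirichletForm μ₁ q₁ (fun x => √(F (x, y)))
        + C₂ * ∑ x, μ₁ x * dirichletForm μ₂ q₂ (fun y => √(F (x, y))) := by
  set g : ι → ℝ := fun x => ∑ y, μ₂ y * F (x, y)
  have hg : ∀ x, 0 ≤ g x := fun x => sum_nonneg fun y _ => mul_nonneg (hμ₂ y) (hF _)
  have hgs : ∑ x, μ₁ x * g x = 1 := by simpa only [g, mul_sum, mul_assoc] using hFs
  calc ∑ x, ∑ y, μ₁ x * μ₂ y * (F (x, y) * log (F (x, y)))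
      = ∑ x, μ₁ x * ∑ y, μ₂ y * (F (x, y) * log (F (x, y))) := by simp only [mul_sum, mul_assoc]
    _ ≤ ∑ x, μ₁ x * (g x * log (g x) + C₂ * dirichletForm μ₂ q₂ (fun y => √(F (x, y)))) :=
        sum_le_sum fun x _ => mul_le_mul_of_nonneg_left
          (h₂.sum_mul_log_le hμ₂ hq₂ hC₂ fun y => hF (x, y)) (hμ₁ x)
    _ = ∑ x, μ₁ x * (g x * log (g x))
          + C₂ * ∑ x, μ₁ x * dirichletForm μ₂ q₂ (fun y => √(F (x, y))) := by
        simp only [mul_add, sum_add_distrib, mul_sum, mul_left_comm]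
    _ ≤ C₁ * dirichletForm μ₁ q₁ (fun x => √(g x))
          + C₂ * ∑ x, μ₁ x * dirichletForm μ₂ q₂ (fun y => √(F (x, y))) := by
        gcongr
        exact h₁ g hg hgs
    _ ≤ _ := by
        gcongr
        exact dirichletForm_sqrt_sum_mul_le hμ₁ hq₁ hμ₂ fun x y => hF (x, y)

theorem tensorization (h₁ : LogSobolev μ₁ q₁ C₁) (h₂ : LogSobolev μ₂ q₂ C₂)
    (hμ₁ : ∀ x, 0 ≤ μ₁ x) (hμ₂ : ∀ y, 0 ≤ μ₂ y) (hμ₁s : ∑ x, μ₁ x = 1) (hμ₂s : ∑ y, μ₂ y = 1)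
    (hq₁ : ∀ x x', 0 ≤ q₁ x x') (hq₂ : ∀ y y', 0 ≤ q₂ y y') (hF : ∀ p, 0 ≤ F p)
    (hFs : ∑ x, ∑ y, μ₁ x * μ₂ y * F (x, y) = 1) :
    ∑ x, ∑ y, μ₁ x * μ₂ y * (F (x, y) * log (F (x, y)))
      ≤ C₁ * ∑ y, μ₂ y * dirichletForm μ₁ q₁ (fun x => √(F (x, y)))
        + C₂ * ∑ x, μ₁ x * dirichletForm μ₂ q₂ (fun y => √(F (x, y))) := by
  have h := tensorization_of_nonneg (h₁.mono hμ₁ hq₁ (le_max_left C₁ 0))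
    (h₂.mono hμ₂ hq₂ (le_max_left C₂ 0)) hμ₁ hμ₂ hq₁ hq₂ (le_max_right _ _) (le_max_right _ _)
    hF hFs
  rwa [h₁.max_zero_mul_sum_dirichletForm hμ₁ hμ₁s hq₁,
    h₂.max_zero_mul_sum_dirichletForm hμ₂ hμ₂s hq₂] at h

end Product

end LogSobolev

end

theorem logSobolev_tensorization_general {X₁ X₂ : Type*} [Fintype X₁] [Fintype X₂]
    (μ₁ : X₁ → ℝ) (μ₂ : X₂ → ℝ) (q₁ : X₁ → X₁ → ℝ) (q₂ : X₂ → X₂ → ℝ)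
    (hμ₁ : ∀ x, 0 ≤ μ₁ x) (hμ₂ : ∀ y, 0 ≤ μ₂ y)
    (hμ₁s : ∑ x, μ₁ x = 1) (hμ₂s : ∑ y, μ₂ y = 1)
    (hq₁ : ∀ x y, 0 ≤ q₁ x y) (hq₂ : ∀ x y, 0 ≤ q₂ x y)
    (C₁ C₂ : ℝ)
    (hLS₁ : ∀ f : X₁ → ℝ, (∀ x, 0 ≤ f x) → ∑ x, μ₁ x * f x = 1 →
      ∑ x, μ₁ x * (f x * Real.log (f x))
        ≤ C₁ * ∑ x, ∑ y, μ₁ x * q₁ x y *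
            (Real.sqrt (f y) - Real.sqrt (f x)) ^ 2)
    (hLS₂ : ∀ f : X₂ → ℝ, (∀ x, 0 ≤ f x) → ∑ x, μ₂ x * f x = 1 →
      ∑ x, μ₂ x * (f x * Real.log (f x))
        ≤ C₂ * ∑ x, ∑ y, μ₂ x * q₂ x y *
            (Real.sqrt (f y) - Real.sqrt (f x)) ^ 2) :
    ∀ F : X₁ × X₂ → ℝ, (∀ p, 0 ≤ F p) →
      ∑ x, ∑ y, μ₁ x * μ₂ y * F (x, y) = 1 →
      ∑ x, ∑ y, μ₁ x * μ₂ y * (F (x, y) * Real.log (F (x, y)))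
        ≤ max C₁ C₂ *
          ((∑ y, μ₂ y * ∑ x, ∑ x', μ₁ x * q₁ x x' *
              (Real.sqrt (F (x', y)) - Real.sqrt (F (x, y))) ^ 2) +
           (∑ x, μ₁ x * ∑ y, ∑ y', μ₂ y * q₂ y y' *
              (Real.sqrt (F (x, y')) - Real.sqrt (F (x, y))) ^ 2)) := by
  intro F hF hFs
  have hT₁ : 0 ≤ ∑ y, μ₂ y * dirichletForm μ₁ q₁ (fun x => √(F (x, y))) :=
    sum_nonneg fun y _ => mul_nonneg (hμ₂ y) (dirichletForm_nonneg hμ₁ hq₁ _)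
  have hT₂ : 0 ≤ ∑ x, μ₁ x * dirichletForm μ₂ q₂ (fun y => √(F (x, y))) :=
    sum_nonneg fun x _ => mul_nonneg (hμ₁ x) (dirichletForm_nonneg hμ₂ hq₂ _)
  calc _ ≤ C₁ * ∑ y, μ₂ y * dirichletForm μ₁ q₁ (fun x => √(F (x, y)))
        + C₂ * ∑ x, μ₁ x * dirichletForm μ₂ q₂ (fun y => √(F (x, y))) :=
      LogSobolev.tensorization hLS₁ hLS₂ hμ₁ hμ₂ hμ₁s hμ₂s hq₁ hq₂ hF hFs
    _ ≤ _ := by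
      rw [mul_add]
      exact add_le_add (mul_le_mul_of_nonneg_right (le_max_left _ _) hT₁)
        (mul_le_mul_of_nonneg_right (le_max_right _ _) hT₂)

theorem logSobolev_tensorization {X₁ X₂ : Type*} [Fintype X₁] [Fintype X₂]
    (μ₁ : X₁ → ℝ) (μ₂ : X₂ → ℝ) (q₁ : X₁ → X₁ → ℝ) (q₂ : X₂ → X₂ → ℝ)
    (hμ₁ : ∀ x, 0 ≤ μ₁ x) (hμ₂ : ∀ y, 0 ≤ μ₂ y)
    (hμ₁s : ∑ x, μ₁ x = 1) (hμ₂s : ∑ y, μ₂ y = 1)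
    (hq₁ : ∀ x y, 0 ≤ q₁ x y) (hq₂ : ∀ x y, 0 ≤ q₂ x y)
    (hrev₁ : ∀ x y, μ₁ x * q₁ x y = μ₁ y * q₁ y x)
    (hrev₂ : ∀ x y, μ₂ x * q₂ x y = μ₂ y * q₂ y x)
    (C₁ C₂ : ℝ)
    (hLS₁ : ∀ f : X₁ → ℝ, (∀ x, 0 ≤ f x) → ∑ x, μ₁ x * f x = 1 →
      ∑ x, μ₁ x * (f x * Real.log (f x))
        ≤ C₁ * ∑ x, ∑ y, μ₁ x * q₁ x y *
            (Real.sqrt (f y) - Real.sqrt (f x)) ^ 2)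
    (hLS₂ : ∀ f : X₂ → ℝ, (∀ x, 0 ≤ f x) → ∑ x, μ₂ x * f x = 1 →
      ∑ x, μ₂ x * (f x * Real.log (f x))
        ≤ C₂ * ∑ x, ∑ y, μ₂ x * q₂ x y *
            (Real.sqrt (f y) - Real.sqrt (f x)) ^ 2) :
    ∀ F : X₁ × X₂ → ℝ, (∀ p, 0 ≤ F p) →
      ∑ x, ∑ y, μ₁ x * μ₂ y * F (x, y) = 1 →
      ∑ x, ∑ y, μ₁ x * μ₂ y * (F (x, y) * Real.log (F (x, y)))
        ≤ max C₁ C₂ *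
          ((∑ y, μ₂ y * ∑ x, ∑ x', μ₁ x * q₁ x x' *
              (Real.sqrt (F (x', y)) - Real.sqrt (F (x, y))) ^ 2) +
           (∑ x, μ₁ x * ∑ y, ∑ y', μ₂ y * q₂ y y' *
              (Real.sqrt (F (x, y')) - Real.sqrt (F (x, y))) ^ 2)) :=
  logSobolev_tensorization_general μ₁ μ₂ q₁ q₂ hμ₁ hμ₂ hμ₁s hμ₂s hq₁ hq₂ C₁ C₂ hLS₁ hLS₂
end

section
/- Fix θ ∈ (ℝᵈ)ⁿ and define ψ_θ(x) = exp(θ · x) for x ∈ (ℤᵈ)ⁿ, where · is the inner product. Let p : ℤᵈ → [0,1] be a finite-range symmetric probability (p(z) = p(−z), Σ p(z) = 1, p supported in a ball of radius R). For the stirring generator (L_n f)(x) = Σ_{bonds {u,v}} p(v−u)·[f(σ^{u,v} x) − f(x)] acting on configurations x of n distinct points, where σ^{u,v} exchanges the occupants of sites u and v, there exists a₀ < ∞ depending only on p such that (L_n ψ_θ)(x)/ψ_θ(x) ≤ a₀·Σ_{j=1}^{d} Σ_{i=1}^{n} (cosh(a₀·θ_{i,j}) − 1) for all configurations x. -/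
/-!
Write `ψ_θ(σ^{u,v} x) = ψ_θ(x) e^{D(u,v)}` with `D(u,v) = θ · (σ^{u,v} x - x)` and use
`e^t - 1 ≤ t + 2 (cosh t - 1)`. The linear part `∑ p(v - u) D(u,v)` vanishes: the jumps of
particle `i` out of `x_i` and into `x_i` are, after translating by `x_i`, the same displacements
`z` with opposite signs. An exchange moves at most two particles, each by `±(v - u)`, so
`cosh D - 1` is bounded by the sum of `∑_j (cosh (a₀ θ_{i,j}) - 1)` over the moving particles
once `a₀ ≥ 2 d R`, with `R` the range of `p`. Each particle meets bonds of total `p`-mass `2`.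
-/

/-- The stirring (exchange) map: occupants of sites `u` and `v` are swapped. -/
def swapConf {n d : ℕ} (x : Fin n → Fin d → ℤ) (u v : Fin d → ℤ) :
    Fin n → Fin d → ℤ :=
  fun i => if x i = u then v else if x i = v then u else x i

/-- The exponential function `ψ_θ(x) = exp(θ · x)`. -/
noncomputable def psiExp {n d : ℕ} (θ : Fin n → Fin d → ℝ)
    (x : Fin n → Fin d → ℤ) : ℝ :=
  Real.exp (∑ i, ∑ j, θ i j * (x i j : ℝ))

open Finset Function Real

theorem Real.exp_sub_one_le_add_two_mul_cosh_sub_one (t : ℝ) :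
    exp t - 1 ≤ t + 2 * (cosh t - 1) := by
  rw [cosh_eq]
  linarith [add_one_le_exp (-t)]

theorem Real.cosh_sum_sub_one_le {ι : Type*} (s : Finset ι) (t : ι → ℝ) {m : ℝ}
    (hm : (#s : ℝ) ≤ m) : cosh (∑ k ∈ s, t k) - 1 ≤ ∑ k ∈ s, (cosh (m * t k) - 1) := by
  rcases s.eq_empty_or_nonempty with rfl | hs
  · simp
  obtain ⟨k₀, hk₀, hmax⟩ := s.exists_max_image (fun k => |t k|) hs
  have hsum : |∑ k ∈ s, t k| ≤ |m * t k₀| := calc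
    |∑ k ∈ s, t k| ≤ ∑ k ∈ s, |t k| := abs_sum_le_sum_abs _ _
    _ ≤ #s • |t k₀| := sum_le_card_nsmul _ _ _ hmax
    _ ≤ |m * t k₀| := by
      rw [nsmul_eq_mul, abs_mul, abs_of_nonneg ((Nat.cast_nonneg _).trans hm)]
      gcongr
  calc cosh (∑ k ∈ s, t k) - 1 ≤ cosh (m * t k₀) - 1 := by
        gcongr
        exact cosh_le_cosh.mpr hsum
    _ ≤ ∑ k ∈ s, (cosh (m * t k) - 1) :=
        single_le_sum (f := fun k => cosh (m * t k) - 1)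
          (fun k _ => sub_nonneg.mpr (one_le_cosh _)) hk₀

theorem Real.cosh_sum_sub_one_le_of_card_filter_ne_zero_le {ι : Type*} (s : Finset ι) (t : ι → ℝ)
    {m : ℝ} (hm : (#{k ∈ s | t k ≠ 0} : ℝ) ≤ m) :
    cosh (∑ k ∈ s, t k) - 1 ≤ ∑ k ∈ s, (cosh (m * t k) - 1) := by
  rw [← sum_filter_ne_zero]
  exact (cosh_sum_sub_one_le _ t hm).trans <| sum_le_sum_of_subset_of_nonneg (filter_subset _ _)
    fun k _ _ => sub_nonneg.mpr (one_le_cosh _)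

theorem tsum_tsum_eq_sum_sum_of_ne_zero {α β : Type*} {f : α → β → ℝ} {s : Finset α}
    {t : Finset β} (hf : ∀ a b, f a b ≠ 0 → a ∈ s ∧ b ∈ t) :
    ∑' a, ∑' b, f a b = ∑ a ∈ s, ∑ b ∈ t, f a b := by
  rw [tsum_congr fun a => tsum_eq_sum fun b hb => not_not.mp fun hne => hb (hf a b hne).2]
  exact tsum_eq_sum fun a ha => sum_eq_zero fun b _ => not_not.mp fun hne => ha (hf a b hne).1

section Translation

variable {G ι : Type*} [AddCommGroup G] {C : Finset G} {a : G} {h : G → ℝ}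

theorem sum_comp_sub_right_eq_tsum (hC : ∀ z, h z ≠ 0 → a + z ∈ C) :
    ∑ v ∈ C, h (v - a) = ∑' z, h z := by
  rw [← (Equiv.subRight a).tsum_eq]
  exact (tsum_eq_sum fun v hv => not_not.mp fun hne => hv (by simpa using hC _ hne)).symm

theorem sum_comp_sub_left_eq_tsum (hC : ∀ z, h z ≠ 0 → a - z ∈ C) :
    ∑ u ∈ C, h (a - u) = ∑' z, h z := by
  rw [← (Equiv.subLeft a).tsum_eq]
  exact (tsum_eq_sum fun u hu => not_not.mp fun hne => hu (by simpa using hC _ hne)).symm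

def StepClosed (p : G → ℝ) (x : ι → G) (C : Finset G) : Prop :=
  ∀ i, x i ∈ C ∧ ∀ z, p z ≠ 0 → x i + z ∈ C ∧ x i - z ∈ C

variable [DecidableEq G] {p : G → ℝ} {x : ι → G}

open Pointwise in
theorem exists_stepClosed [Fintype ι] (x : ι → G) (hp : (support p).Finite) :
    ∃ C, StepClosed p x C := by
  set S := hp.toFinset
  refine ⟨univ.image x + insert 0 (S ∪ -S), fun i => ⟨?_, fun z hz => ⟨?_, ?_⟩⟩⟩
  · simpa using add_mem_add (mem_image_of_mem x (mem_univ i)) (mem_insert_self 0 (S ∪ -S))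
  · exact add_mem_add (mem_image_of_mem x (mem_univ i)) (by simp [S, hz])
  · rw [sub_eq_add_neg]
    exact add_mem_add (mem_image_of_mem x (mem_univ i)) (by simp [S, hz])

namespace StepClosed

theorem sum_sum_ite_left (hC : StepClosed p x C) (i : ι) (hh : ∀ z, h z ≠ 0 → p z ≠ 0) :
    ∑ u ∈ C, ∑ v ∈ C, (if x i = u then h (v - u) else 0) = ∑' z, h z := by
  rw [sum_comm]
  simp only [sum_ite_eq, (hC i).1, if_true]
  exact sum_comp_sub_right_eq_tsum fun z hz => ((hC i).2 z (hh z hz)).1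

theorem sum_sum_ite_right (hC : StepClosed p x C) (i : ι) (hh : ∀ z, h z ≠ 0 → p z ≠ 0) :
    ∑ u ∈ C, ∑ v ∈ C, (if x i = v then h (v - u) else 0) = ∑' z, h z := by
  simp only [sum_ite_eq, (hC i).1, if_true]
  exact sum_comp_sub_left_eq_tsum fun z hz => ((hC i).2 z (hh z hz)).2

end StepClosed

end Translation

namespace Stirring

variable {n d : ℕ}

def dot (t : Fin d → ℝ) (z : Fin d → ℤ) : ℝ := ∑ j, t j * z j

theorem dot_sub (t : Fin d → ℝ) (z w : Fin d → ℤ) : dot t (z - w) = dot t z - dot t w := by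
  simp only [dot, Pi.sub_apply, Int.cast_sub, mul_sub, sum_sub_distrib]

theorem dot_zero (t : Fin d → ℝ) : dot t 0 = 0 := by
  simp [dot]

noncomputable def coshWeight (a : ℝ) (t : Fin d → ℝ) : ℝ := ∑ j, (cosh (a * t j) - 1)

theorem coshWeight_nonneg (a : ℝ) (t : Fin d → ℝ) : 0 ≤ coshWeight a t :=
  sum_nonneg fun _ _ => sub_nonneg.mpr (one_le_cosh _)

theorem cosh_two_mul_dot_sub_one_le {a : ℝ} (t : Fin d → ℝ) {z : Fin d → ℤ}
    (hz : 2 * d * ‖z‖ ≤ a) : cosh (2 * dot t z) - 1 ≤ coshWeight a t := by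
  rw [dot, mul_sum]
  refine (cosh_sum_sub_one_le univ _ (m := d) (by simp)).trans <|
    sum_le_sum fun j _ => sub_le_sub_right (cosh_le_cosh.mpr ?_) 1
  have hzj : |(z j : ℝ)| ≤ ‖z‖ := (Int.norm_eq_abs _).symm.trans_le (norm_le_pi_norm z j)
  have ha : 0 ≤ a := le_trans (by positivity) hz
  calc |d * (2 * (t j * z j))| = 2 * d * |(z j : ℝ)| * |t j| := by
        simp only [abs_mul, Nat.abs_cast, abs_two]; ring
    _ ≤ 2 * d * ‖z‖ * |t j| := by gcongr
    _ ≤ |a * t j| := by rw [abs_mul, abs_of_nonneg ha]; gcongr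

theorem swapConf_apply_of_ne {x : Fin n → Fin d → ℤ} {u v : Fin d → ℤ} {i : Fin n}
    (hu : x i ≠ u) (hv : x i ≠ v) : swapConf x u v i = x i := by
  simp [swapConf, hu, hv]

theorem swapConf_apply_sub_self (x : Fin n → Fin d → ℤ) (u v : Fin d → ℤ) (i : Fin n) :
    swapConf x u v i - x i = (if x i = u then v - u else 0) - (if x i = v then v - u else 0) := by
  unfold swapConf
  split_ifs <;> simp_all

theorem norm_swapConf_apply_sub_self_le (x : Fin n → Fin d → ℤ) (u v : Fin d → ℤ) (i : Fin n) :
    ‖swapConf x u v i - x i‖ ≤ ‖v - u‖ := by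
  rw [swapConf_apply_sub_self]
  split_ifs <;> simp [norm_sub_rev]

theorem card_swapConf_apply_ne_le_two {x : Fin n → Fin d → ℤ} (hx : Injective x)
    (u v : Fin d → ℤ) : #{i | swapConf x u v i ≠ x i} ≤ 2 := by
  refine (card_le_card_of_injOn x (t := {u, v}) (fun i hi => ?_) hx.injOn).trans card_le_two
  by_contra hne
  simp only [coe_insert, coe_singleton, Set.mem_insert_iff, Set.mem_singleton_iff, not_or] at hne
  exact (mem_filter.mp hi).2 (swapConf_apply_of_ne hne.1 hne.2)

def increment (θ : Fin n → Fin d → ℝ) (x : Fin n → Fin d → ℤ) (u v : Fin d → ℤ) : ℝ :=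
  ∑ i, dot (θ i) (swapConf x u v i - x i)

variable {θ : Fin n → Fin d → ℝ} {x : Fin n → Fin d → ℤ} {u v : Fin d → ℤ} {p : (Fin d → ℤ) → ℝ}
  {C : Finset (Fin d → ℤ)}

theorem psiExp_swapConf : psiExp θ (swapConf x u v) = psiExp θ x * exp (increment θ x u v) := by
  simp only [psiExp, increment, dot, ← exp_add, ← sum_add_distrib, Pi.sub_apply, Int.cast_sub,
    mul_sub, add_sub_cancel]

theorem increment_eq_sum_ite : increment θ x u v = ∑ i,
    ((if x i = u then dot (θ i) (v - u) else 0) - (if x i = v then dot (θ i) (v - u) else 0)) := by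
  simp only [increment, swapConf_apply_sub_self, dot_sub, apply_ite (dot _), dot_zero]

theorem cosh_increment_sub_one_le (hx : Injective x) {a : ℝ} (ha : 2 * d * ‖v - u‖ ≤ a) :
    cosh (increment θ x u v) - 1 ≤ ∑ i,
      ((if x i = u then coshWeight a (θ i) else 0) + (if x i = v then coshWeight a (θ i) else 0)) := by
  have hcard : (#{i | dot (θ i) (swapConf x u v i - x i) ≠ 0} : ℝ) ≤ 2 := by
    refine le_trans ?_ (Nat.cast_le.mpr (card_swapConf_apply_ne_le_two hx u v))
    refine Nat.cast_le.mpr (card_le_card (monotone_filter_right _ fun i _ hi heq => hi ?_))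
    rw [heq, sub_self, dot_zero]
  refine (cosh_sum_sub_one_le_of_card_filter_ne_zero_le _ _ hcard).trans (sum_le_sum fun i _ => ?_)
  have hW := coshWeight_nonneg a (θ i)
  by_cases hi : swapConf x u v i = x i
  · rw [hi, sub_self, dot_zero, mul_zero, cosh_zero, sub_self]
    positivity
  have hnorm : 2 * d * ‖swapConf x u v i - x i‖ ≤ a :=
    (mul_le_mul_of_nonneg_left (norm_swapConf_apply_sub_self_le x u v i) (by positivity)).trans ha
  calc _ ≤ coshWeight a (θ i) := cosh_two_mul_dot_sub_one_le (θ i) hnorm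
    _ ≤ _ := by
      by_cases hu : x i = u
      · rw [if_pos hu]
        exact le_add_of_nonneg_right (ite_nonneg hW le_rfl)
      · have hv : x i = v := not_not.mp fun hv => hi (swapConf_apply_of_ne hu hv)
        rw [if_neg hu, if_pos hv, zero_add]

theorem sum_sum_mul_increment_eq_zero (hC : StepClosed p x C) :
    ∑ u ∈ C, ∑ v ∈ C, p (v - u) * increment θ x u v = 0 := by
  simp only [increment_eq_sum_ite, mul_sum, mul_sub, mul_ite, mul_zero]
  rw [sum_congr rfl fun u _ => sum_comm, sum_comm]
  refine sum_eq_zero fun i _ => ?_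
  have hh : ∀ z, p z * dot (θ i) z ≠ 0 → p z ≠ 0 := fun _ => left_ne_zero_of_mul
  simp only [sum_sub_distrib, hC.sum_sum_ite_left i hh, hC.sum_sum_ite_right i hh, sub_self]

theorem sum_sum_mul_sum_ite_add_ite (hC : StepClosed p x C) (W : Fin n → ℝ) :
    ∑ u ∈ C, ∑ v ∈ C, p (v - u) * ∑ i, ((if x i = u then W i else 0) + (if x i = v then W i else 0))
      = 2 * (∑' z, p z) * ∑ i, W i := by
  simp only [mul_sum, mul_add, mul_ite, mul_zero]
  rw [sum_congr rfl fun u _ => sum_comm, sum_comm]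
  refine sum_congr rfl fun i _ => ?_
  have hh : ∀ z, p z * W i ≠ 0 → p z ≠ 0 := fun _ => left_ne_zero_of_mul
  simp only [sum_add_distrib, hC.sum_sum_ite_left i hh, hC.sum_sum_ite_right i hh, tsum_mul_right]
  ring

theorem mem_of_mul_psiExp_swapConf_sub_ne_zero (hC : StepClosed p x C)
    (h : p (v - u) * (psiExp θ (swapConf x u v) - psiExp θ x) ≠ 0) : u ∈ C ∧ v ∈ C := by
  have hp : p (v - u) ≠ 0 := left_ne_zero_of_mul h
  obtain ⟨i, hi⟩ : ∃ i, swapConf x u v i ≠ x i :=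
    Function.ne_iff.mp fun hs => h (by rw [hs, sub_self, mul_zero])
  by_cases hu : x i = u
  · exact ⟨hu ▸ (hC i).1, by simpa [hu] using ((hC i).2 _ hp).1⟩
  · have hv : x i = v := not_not.mp fun hv => hi (swapConf_apply_of_ne hu hv)
    exact ⟨by simpa [hv] using ((hC i).2 _ hp).2, hv ▸ (hC i).1⟩

theorem sum_sum_mul_exp_increment_sub_one_le (hp0 : ∀ z, 0 ≤ p z) (hx : Injective x)
    (hC : StepClosed p x C) {a : ℝ} (ha : ∀ z, p z ≠ 0 → 2 * d * ‖z‖ ≤ a) :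
    ∑ u ∈ C, ∑ v ∈ C, p (v - u) * (exp (increment θ x u v) - 1)
      ≤ 4 * (∑' z, p z) * ∑ i, coshWeight a (θ i) := by
  have hcosh : ∀ u v, p (v - u) * (cosh (increment θ x u v) - 1) ≤ p (v - u) * ∑ i,
      ((if x i = u then coshWeight a (θ i) else 0) + (if x i = v then coshWeight a (θ i) else 0)) := by
    intro u v
    rcases eq_or_ne (p (v - u)) 0 with h | h
    · simp [h]
    · exact mul_le_mul_of_nonneg_left (cosh_increment_sub_one_le hx (ha _ h)) (hp0 _)
  calc ∑ u ∈ C, ∑ v ∈ C, p (v - u) * (exp (increment θ x u v) - 1)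
      ≤ ∑ u ∈ C, ∑ v ∈ C, (p (v - u) * increment θ x u v
          + 2 * (p (v - u) * (cosh (increment θ x u v) - 1))) := by
        gcongr with u _ v _
        linarith [mul_le_mul_of_nonneg_left
          (exp_sub_one_le_add_two_mul_cosh_sub_one (increment θ x u v)) (hp0 (v - u))]
    _ = ∑ u ∈ C, ∑ v ∈ C, p (v - u) * increment θ x u v
          + 2 * ∑ u ∈ C, ∑ v ∈ C, p (v - u) * (cosh (increment θ x u v) - 1) := by
        simp only [sum_add_distrib, mul_sum]
    _ ≤ 0 + 2 * ∑ u ∈ C, ∑ v ∈ C, p (v - u) * ∑ i,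
          ((if x i = u then coshWeight a (θ i) else 0)
            + (if x i = v then coshWeight a (θ i) else 0)) := by
        rw [sum_sum_mul_increment_eq_zero hC]
        gcongr 0 + 2 * ?_
        exact sum_le_sum fun u _ => sum_le_sum fun v _ => hcosh u v
    _ = 4 * (∑' z, p z) * ∑ i, coshWeight a (θ i) := by
        rw [sum_sum_mul_sum_ite_add_ite hC]
        ring

end Stirring

open Stirring

theorem generator_on_exponential_general (d : ℕ) (p : (Fin d → ℤ) → ℝ)
    (hp0 : ∀ z, 0 ≤ p z)
    (hpfin : (Function.support p).Finite) (hpsum : HasSum p 1) :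
    ∃ a₀ : ℝ, ∀ (n : ℕ) (θ : Fin n → Fin d → ℝ)
      (x : Fin n → Fin d → ℤ), Function.Injective x →
      (1 / 2) * ∑' (u : Fin d → ℤ), ∑' (v : Fin d → ℤ),
          p (v - u) * (psiExp θ (swapConf x u v) - psiExp θ x)
        ≤ psiExp θ x *
            (a₀ * ∑ j, ∑ i, (Real.cosh (a₀ * θ i j) - 1)) := by
  obtain ⟨R, hR⟩ := (hpfin.image (‖·‖)).bddAbove
  set a := max 2 (2 * d * R)
  have ha : ∀ z, p z ≠ 0 → 2 * d * ‖z‖ ≤ a := fun z hz =>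
    le_max_of_le_right (by gcongr; exact hR ⟨z, hz, rfl⟩)
  refine ⟨a, fun n θ x hx => ?_⟩
  obtain ⟨C, hC⟩ := exists_stepClosed x hpfin
  have hψ : 0 < psiExp θ x := exp_pos _
  have hW : 0 ≤ ∑ i, coshWeight a (θ i) := sum_nonneg fun i _ => coshWeight_nonneg a (θ i)
  rw [tsum_tsum_eq_sum_sum_of_ne_zero fun u v => mem_of_mul_psiExp_swapConf_sub_ne_zero hC]
  calc (1 / 2) * ∑ u ∈ C, ∑ v ∈ C, p (v - u) * (psiExp θ (swapConf x u v) - psiExp θ x)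
      = (1 / 2) * psiExp θ x * ∑ u ∈ C, ∑ v ∈ C, p (v - u) * (exp (increment θ x u v) - 1) := by
        simp only [psiExp_swapConf, mul_sum]
        exact sum_congr rfl fun u _ => sum_congr rfl fun v _ => by ring
    _ ≤ (1 / 2) * psiExp θ x * (4 * (∑' z, p z) * ∑ i, coshWeight a (θ i)) := by
        exact mul_le_mul_of_nonneg_left (sum_sum_mul_exp_increment_sub_one_le hp0 hx hC ha)
          (by linarith)
    _ ≤ psiExp θ x * (a * ∑ i, coshWeight a (θ i)) := by
        rw [hpsum.tsum_eq]
        nlinarith [mul_nonneg (mul_nonneg hψ.le (sub_nonneg.mpr (le_max_left 2 (2 * d * R)))) hW]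
    _ = psiExp θ x * (a * ∑ j, ∑ i, (cosh (a * θ i j) - 1)) := by
        simp only [coshWeight]
        rw [sum_comm]

theorem generator_on_exponential (d : ℕ) (p : (Fin d → ℤ) → ℝ)
    (hp0 : ∀ z, 0 ≤ p z) (hpsym : ∀ z, p (-z) = p z)
    (hpfin : (Function.support p).Finite) (hpsum : HasSum p 1) :
    ∃ a₀ : ℝ, ∀ (n : ℕ) (θ : Fin n → Fin d → ℝ)
      (x : Fin n → Fin d → ℤ), Function.Injective x →
      (1 / 2) * ∑' (u : Fin d → ℤ), ∑' (v : Fin d → ℤ),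
          p (v - u) * (psiExp θ (swapConf x u v) - psiExp θ x)
        ≤ psiExp θ x *
            (a₀ * ∑ j, ∑ i, (Real.cosh (a₀ * θ i j) - 1)) :=
  generator_on_exponential_general d p hp0 hpfin hpsum
end

section
/- For a finite-range symmetric transition probability p on ℤᵈ and θ ∈ (ℝᵈ)ⁿ with ψ_θ(x) = exp(θ·x), there exists a₀ < ∞ depending only on p such that Σ_{bonds {u,v}} p(v−u)·(ψ_θ(σ^{u,v}x)/ψ_θ(x) − 1)² ≤ a₀·Σ_{j=1}^{d} Σ_{i=1}^{n} (cosh(a₀·θ_{i,j}) − 1) for every configuration x of n distinct points in ℤᵈ. -/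
lemma sq_exp_sub_one (t : ℝ) : (Real.exp t - 1)^2 ≤ 2*(Real.cosh (2*t) - 1) := by
  rw [Real.cosh_eq]
  have h1 : Real.exp (2*t) = Real.exp t ^ 2 := by
    rw [two_mul, Real.exp_add]; ring
  have h2 : Real.exp (-(2*t)) = Real.exp (-t) ^ 2 := by
    rw [show -(2*t) = -t + -t by ring, Real.exp_add]; ring
  have h3 : Real.exp t * Real.exp (-t) = 1 := by
    rw [← Real.exp_add]; simp
  have e1 := Real.exp_pos t
  have e2 := Real.exp_pos (-t)
  nlinarith [sq_nonneg (Real.exp t - 1), sq_nonneg (Real.exp (-t) - 1),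
    mul_nonneg (sq_nonneg (Real.exp t - 1)) e2.le,
    mul_nonneg (mul_nonneg (sq_nonneg (Real.exp t - 1)) e2.le) e2.le]

lemma two_cosh_add (x y : ℝ) :
    Real.cosh (x + y) - 1 ≤ ((Real.cosh (2*x) - 1) + (Real.cosh (2*y) - 1)) / 2 := by
  have hx := Real.cosh_sq x
  have hy := Real.cosh_sq y
  rw [Real.cosh_add, Real.cosh_two_mul, Real.cosh_two_mul]
  nlinarith [sq_nonneg (Real.cosh x - Real.cosh y), sq_nonneg (Real.sinh x - Real.sinh y)]

lemma cosh_mono {b c t : ℝ} (h : |b| ≤ c) :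
    Real.cosh (b*t) ≤ Real.cosh (c*t) := by
  rw [Real.cosh_le_cosh, abs_mul, abs_mul]
  have : |c| = c := abs_of_nonneg ((abs_nonneg b).trans h)
  rw [this]
  exact mul_le_mul_of_nonneg_right h (abs_nonneg t)

lemma cosh_sum_le {ι : Type*} (s : Finset ι) (a : ι → ℝ) :
    Real.cosh (∑ i ∈ s, a i) - 1 ≤
      ∑ i ∈ s, (Real.cosh ((2:ℝ)^s.card * a i) - 1) := by
  classical
  induction s using Finset.induction_on generalizing a with
  | empty => simp
  | @insert b s hb ih =>
    rw [Finset.sum_insert hb, Finset.card_insert_of_notMem hb, Finset.sum_insert hb]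
    have h1 := two_cosh_add (a b) (∑ i ∈ s, a i)
    have h2 : Real.cosh (2 * ∑ i ∈ s, a i) - 1 ≤
        ∑ i ∈ s, (Real.cosh ((2:ℝ)^(s.card+1) * a i) - 1) := by
      have : 2 * ∑ i ∈ s, a i = ∑ i ∈ s, 2 * a i := Finset.mul_sum _ _ _
      rw [this]
      refine (ih (fun i => 2 * a i)).trans ?_
      apply Finset.sum_le_sum
      intro i _
      have : (2:ℝ)^s.card * (2 * a i) = (2:ℝ)^(s.card+1) * a i := by ring
      rw [this]
    have h3 : Real.cosh (2 * a b) - 1 ≤ Real.cosh ((2:ℝ)^(s.card+1) * a b) - 1 := by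
      have : |(2:ℝ)| ≤ (2:ℝ)^(s.card+1) := by
        rw [abs_of_nonneg (by norm_num : (0:ℝ) ≤ 2)]
        calc (2:ℝ) = 2^1 := (pow_one 2).symm
        _ ≤ 2^(s.card+1) := pow_le_pow_right₀ (by norm_num) (by omega)
      linarith [cosh_mono (t := a b) this]
    have h4 : (0:ℝ) ≤ Real.cosh (2 * a b) - 1 := by linarith [Real.one_le_cosh (2 * a b)]
    have h5 : (0:ℝ) ≤ Real.cosh (2 * ∑ i ∈ s, a i) - 1 := by
      linarith [Real.one_le_cosh (2 * ∑ i ∈ s, a i)]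
    linarith

theorem carre_du_champ_on_exponential (d : ℕ) (p : (Fin d → ℤ) → ℝ)
    (hp0 : ∀ z, 0 ≤ p z) (hpsym : ∀ z, p (-z) = p z)
    (hpfin : (Function.support p).Finite) (hpsum : HasSum p 1) :
    ∃ a₀ : ℝ, ∀ (n : ℕ) (θ : Fin n → Fin d → ℝ)
      (x : Fin n → Fin d → ℤ), Function.Injective x →
      (1 / 2) * ∑' (u : Fin d → ℤ), ∑' (v : Fin d → ℤ),
          p (v - u) * (psiExp θ (swapConf x u v) / psiExp θ x - 1) ^ 2
        ≤ a₀ * ∑ j, ∑ i, (Real.cosh (a₀ * θ i j) - 1) := by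
  classical
  set S : Finset (Fin d → ℤ) := hpfin.toFinset with hS
  set R : ℕ := S.sup (fun z => Finset.univ.sup fun j => (z j).natAbs) with hRdef
  set a : ℝ := 2^(2*d+1) * ((R:ℝ) + 1) with hadef
  set K : ℕ := S.card with hKdef
  have ha_pos : 0 < a := by positivity
  set a₀ : ℝ := a + 2*(K:ℝ) with ha0def
  have haa0 : a ≤ a₀ := by
    have : (0:ℝ) ≤ (K:ℝ) := Nat.cast_nonneg K
    rw [ha0def]; linarith
  have hKa0 : 2*(K:ℝ) ≤ a₀ := by rw [ha0def]; linarith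
  have ha0_nonneg : 0 ≤ a₀ := by positivity
  have hpS : ∀ z, z ∉ S → p z = 0 := by
    intro z hz
    by_contra h
    exact hz (hpfin.mem_toFinset.mpr h)
  have hp1 : ∀ z, p z ≤ 1 := fun z => le_hasSum hpsum z (fun i _ => hp0 i)
  have hRz : ∀ z ∈ S, ∀ j, |(z j : ℝ)| ≤ (R:ℝ) := by
    intro z hz j
    have h1 : (z j).natAbs ≤ R := by
      rw [hRdef]
      exact le_trans (Finset.le_sup (f := fun j => (z j).natAbs) (Finset.mem_univ j))
        (Finset.le_sup (f := fun z => Finset.univ.sup fun j => (z j).natAbs) hz)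
    calc |(z j : ℝ)| = ((z j).natAbs : ℝ) := by
          rw [Nat.cast_natAbs, Int.cast_abs]
      _ ≤ (R:ℝ) := by exact_mod_cast h1
  refine ⟨a₀, ?_⟩
  intro n θ x hx
  set F : (Fin d → ℤ) → (Fin d → ℤ) → ℝ := fun u v =>
    p (v - u) * (psiExp θ (swapConf x u v) / psiExp θ x - 1) ^ 2 with hF
  have hF0 : ∀ u v, 0 ≤ F u v := fun u v => mul_nonneg (hp0 _) (sq_nonneg _)
  set D : (Fin d → ℤ) → (Fin d → ℤ) → ℝ := fun u v =>
    ∑ i, ∑ j, θ i j * (((swapConf x u v) i j : ℝ) - (x i j : ℝ)) with hD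
  have hratio : ∀ u v, psiExp θ (swapConf x u v) / psiExp θ x = Real.exp (D u v) := by
    intro u v
    rw [psiExp, psiExp, ← Real.exp_sub]
    congr 1
    rw [← Finset.sum_sub_distrib]
    refine Finset.sum_congr rfl fun i _ => ?_
    rw [← Finset.sum_sub_distrib]
    exact Finset.sum_congr rfl fun j _ => by ring
  set I : (Fin d → ℤ) → (Fin d → ℤ) → Finset (Fin n) := fun u v =>
    Finset.univ.filter (fun i => x i = u ∨ x i = v) with hI
  have hswap_eq : ∀ u v i, i ∉ I u v → swapConf x u v i = x i := by
    intro u v i hi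
    simp only [hI, Finset.mem_filter, Finset.mem_univ, true_and] at hi
    push_neg at hi
    simp [swapConf, hi.1, hi.2]
  have hDI : ∀ u v, D u v =
      ∑ i ∈ I u v, ∑ j, θ i j * (((swapConf x u v) i j : ℝ) - (x i j : ℝ)) := by
    intro u v
    rw [hD]
    symm
    apply Finset.sum_filter_of_ne
    intro i _ hne
    by_contra hc
    apply hne
    have : swapConf x u v i = x i := by
      have : i ∉ I u v := by
        simp only [hI, Finset.mem_filter, Finset.mem_univ, true_and]
        exact hc
      exact hswap_eq u v i this
    simp [this]
  have hIcard : ∀ u v, (I u v).card ≤ 2 := by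
    intro u v
    have hsub : I u v ⊆ Finset.univ.filter (fun i => x i = u) ∪
        Finset.univ.filter (fun i => x i = v) := by
      intro i hi
      simp only [hI, Finset.mem_filter, Finset.mem_univ, true_and] at hi
      simp only [Finset.mem_union, Finset.mem_filter, Finset.mem_univ, true_and]
      exact hi
    have h1 : (Finset.univ.filter (fun i => x i = u)).card ≤ 1 := by
      apply Finset.card_le_one.mpr
      intro i hi k hk
      simp only [Finset.mem_filter] at hi hk
      exact hx (hi.2.trans hk.2.symm)
    have h2 : (Finset.univ.filter (fun i => x i = v)).card ≤ 1 := by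
      apply Finset.card_le_one.mpr
      intro i hi k hk
      simp only [Finset.mem_filter] at hi hk
      exact hx (hi.2.trans hk.2.symm)
    have hc1 := Finset.card_le_card hsub
    have hc2 := Finset.card_union_le (Finset.univ.filter (fun i => x i = u))
      (Finset.univ.filter (fun i => x i = v))
    exact le_trans hc1 (le_trans hc2 (add_le_add h1 h2))
  -- the key pointwise bound
  have key : ∀ u v, v - u ∈ S →
      F u v ≤ 2 * ∑ i ∈ I u v, ∑ j, (Real.cosh (a * θ i j) - 1) := by
    intro u v hvu
    have hc : ∀ i ∈ I u v, ∀ j, |((swapConf x u v) i j : ℝ) - (x i j : ℝ)| ≤ (R:ℝ) := by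
      intro i hi j
      simp only [hI, Finset.mem_filter, Finset.mem_univ, true_and] at hi
      have hz := hRz _ hvu j
      by_cases h1 : x i = u
      · have : swapConf x u v i = v := by simp [swapConf, h1]
        rw [this]
        have : ((v j : ℝ)) - (x i j : ℝ) = ((v - u) j : ℝ) := by
          rw [h1]; push_cast [Pi.sub_apply]; ring
        rw [this]; exact hz
      · have h2 : x i = v := hi.resolve_left h1
        have : swapConf x u v i = u := by simp [swapConf, h1, h2]
        rw [this]
        have : ((u j : ℝ)) - (x i j : ℝ) = -(((v - u) j : ℝ)) := by
          rw [h2]; push_cast [Pi.sub_apply]; ring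
        rw [this, abs_neg]; exact hz
    -- cosh bound on 2 * D u v
    set c : Fin n → Fin d → ℝ := fun i j =>
      ((swapConf x u v) i j : ℝ) - (x i j : ℝ) with hcdef
    have h2D : 2 * D u v = ∑ q ∈ (I u v) ×ˢ (Finset.univ : Finset (Fin d)),
        2 * θ q.1 q.2 * c q.1 q.2 := by
      rw [hDI, Finset.mul_sum, Finset.sum_product]
      refine Finset.sum_congr rfl fun i _ => ?_
      rw [Finset.mul_sum]
      exact Finset.sum_congr rfl fun j _ => by ring
    have hcard : ((I u v) ×ˢ (Finset.univ : Finset (Fin d))).card ≤ 2 * d := by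
      rw [Finset.card_product, Finset.card_univ, Fintype.card_fin]
      exact Nat.mul_le_mul_right d (hIcard u v)
    have hcosh : Real.cosh (2 * D u v) - 1 ≤
        ∑ i ∈ I u v, ∑ j, (Real.cosh (a * θ i j) - 1) := by
      rw [h2D]
      refine (cosh_sum_le _ _).trans ?_
      rw [← Finset.sum_product']
      refine Finset.sum_le_sum fun q hq => ?_
      obtain ⟨i, j⟩ := q
      have hiI : i ∈ I u v := (Finset.mem_product.mp hq).1
      set m := ((I u v) ×ˢ (Finset.univ : Finset (Fin d))).card with hm
      have harg : (2:ℝ)^m * (2 * θ i j * c i j) = ((2:ℝ)^m * 2 * c i j) * θ i j := by ring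
      rw [harg]
      have hb : |(2:ℝ)^m * 2 * c i j| ≤ a := by
        rw [abs_mul, abs_mul]
        have e1 : |(2:ℝ)^m| = (2:ℝ)^m := abs_of_nonneg (by positivity)
        have e2 : |(2:ℝ)| = 2 := by norm_num
        rw [e1, e2]
        have h3 : (2:ℝ)^m ≤ (2:ℝ)^(2*d) := by
          apply pow_le_pow_right₀ (by norm_num) hcard
        have h4 : |c i j| ≤ (R:ℝ) + 1 := le_trans (hc i hiI j) (by linarith)
        calc (2:ℝ)^m * 2 * |c i j| ≤ (2:ℝ)^(2*d) * 2 * ((R:ℝ)+1) := by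
              apply mul_le_mul (mul_le_mul_of_nonneg_right h3 (by norm_num)) h4
                (abs_nonneg _) (by positivity)
          _ = a := by rw [hadef]; ring
      linarith [cosh_mono (t := θ i j) hb]
    have hexp : (Real.exp (D u v) - 1)^2 ≤ 2 * (Real.cosh (2 * D u v) - 1) :=
      sq_exp_sub_one (D u v)
    calc F u v = p (v - u) * (Real.exp (D u v) - 1)^2 := by rw [hF]; simp [hratio u v]
      _ ≤ 1 * (Real.exp (D u v) - 1)^2 :=
          mul_le_mul_of_nonneg_right (hp1 _) (sq_nonneg _)
      _ = (Real.exp (D u v) - 1)^2 := one_mul _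
      _ ≤ 2 * (Real.cosh (2 * D u v) - 1) := hexp
      _ ≤ 2 * ∑ i ∈ I u v, ∑ j, (Real.cosh (a * θ i j) - 1) := by linarith
  -- finiteness: reduce tsums to finite sums
  set A : Finset (Fin d → ℤ) := Finset.image x Finset.univ with hA
  set Tv : (Fin d → ℤ) → Finset (Fin d → ℤ) := fun u => S.image (fun z => u + z) with hTv
  set Tu : Finset (Fin d → ℤ) :=
    A ∪ A.biUnion (fun w => S.image (fun z => w - z)) with hTu
  have hmemTv : ∀ u v, v - u ∈ S → v ∈ Tv u := by
    intro u v h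
    rw [hTv]
    exact Finset.mem_image.mpr ⟨v - u, h, by abel⟩
  have hTvS : ∀ u, ∀ v ∈ Tv u, v - u ∈ S := by
    intro u v hv
    rw [hTv] at hv
    obtain ⟨z, hz, rfl⟩ := Finset.mem_image.mp hv
    simpa using hz
  have inner_eq : ∀ u, ∑' v, F u v = ∑ v ∈ Tv u, F u v := by
    intro u
    apply tsum_eq_sum
    intro v hv
    have : p (v - u) = 0 := hpS _ (fun h => hv (hmemTv u v h))
    rw [hF]; simp [this]
  have outer_eq : ∑' u, ∑ v ∈ Tv u, F u v = ∑ u ∈ Tu, ∑ v ∈ Tv u, F u v := by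
    apply tsum_eq_sum
    intro u hu
    apply Finset.sum_eq_zero
    intro v hv
    have hvu := hTvS u v hv
    have hunr : ∀ i, x i ≠ u := by
      intro i h
      apply hu
      rw [hTu]
      exact Finset.mem_union_left _ (Finset.mem_image.mpr ⟨i, Finset.mem_univ i, h⟩)
    have hvnr : ∀ i, x i ≠ v := by
      intro i h
      apply hu
      rw [hTu]
      apply Finset.mem_union_right
      apply Finset.mem_biUnion.mpr
      refine ⟨v, Finset.mem_image.mpr ⟨i, Finset.mem_univ i, h⟩, ?_⟩
      exact Finset.mem_image.mpr ⟨v - u, hvu, by abel⟩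
    have hsw : swapConf x u v = x := by
      funext i
      simp [swapConf, hunr i, hvnr i]
    rw [hF]
    simp only [hsw]
    rw [div_self (by rw [psiExp]; exact Real.exp_ne_zero _)]
    simp
  set h : Fin n → ℝ := fun i => ∑ j, (Real.cosh (a * θ i j) - 1) with hhdef
  have hh0 : ∀ i, 0 ≤ h i := by
    intro i
    apply Finset.sum_nonneg
    intro j _
    linarith [Real.one_le_cosh (a * θ i j)]
  have step1 : ∑' u, ∑' v, F u v = ∑ u ∈ Tu, ∑ v ∈ Tv u, F u v := by
    rw [← outer_eq]
    exact tsum_congr inner_eq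
  have hTvcard : ∀ u, (Tv u).card ≤ K := by
    intro u
    rw [hTv, hKdef]
    exact Finset.card_image_le
  have boundi : ∀ i, ∑ u ∈ Tu, ∑ v ∈ Tv u,
      (if x i = u ∨ x i = v then h i else 0) ≤ (2*(K:ℝ)) * h i := by
    intro i
    have split : ∀ u v, (if x i = u ∨ x i = v then h i else 0) ≤
        (if x i = u then h i else 0) + (if x i = v then h i else 0) := by
      intro u v
      have h0 := hh0 i
      by_cases h1 : x i = u <;> by_cases h2 : x i = v <;>
        simp [h1, h2] <;> split_ifs <;> linarith
    have part1 : ∑ u ∈ Tu, ∑ v ∈ Tv u, (if x i = u then h i else 0)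
        ≤ (K:ℝ) * h i := by
      have e1 : ∀ u, ∑ v ∈ Tv u, (if x i = u then h i else 0)
          = ((Tv u).card : ℝ) * (if x i = u then h i else 0) := by
        intro u
        rw [Finset.sum_const, nsmul_eq_mul]
      calc ∑ u ∈ Tu, ∑ v ∈ Tv u, (if x i = u then h i else 0)
          = ∑ u ∈ Tu, ((Tv u).card : ℝ) * (if x i = u then h i else 0) :=
            Finset.sum_congr rfl fun u _ => e1 u
        _ ≤ ∑ u ∈ Tu, (K:ℝ) * (if x i = u then h i else 0) := by
            apply Finset.sum_le_sum
            intro u _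
            apply mul_le_mul_of_nonneg_right
            · exact_mod_cast hTvcard u
            · split_ifs <;> simp [hh0 i]
        _ = (K:ℝ) * ∑ u ∈ Tu, (if x i = u then h i else 0) :=
            (Finset.mul_sum _ _ _).symm
        _ ≤ (K:ℝ) * h i := by
            apply mul_le_mul_of_nonneg_left _ (Nat.cast_nonneg K)
            rw [Finset.sum_ite_eq]
            split_ifs <;> simp [hh0 i]
    have part2 : ∑ u ∈ Tu, ∑ v ∈ Tv u, (if x i = v then h i else 0)
        ≤ (K:ℝ) * h i := by
      have e1 : ∀ u, ∑ v ∈ Tv u, (if x i = v then h i else 0)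
          = (if x i ∈ Tv u then h i else 0) := by
        intro u
        rw [Finset.sum_ite_eq]
      have e2 : ∑ u ∈ Tu, (if x i ∈ Tv u then h i else 0)
          = ∑ u ∈ Tu.filter (fun u => x i ∈ Tv u), h i :=
        (Finset.sum_filter _ _).symm
      have hsub : Tu.filter (fun u => x i ∈ Tv u) ⊆ S.image (fun z => x i - z) := by
        intro u hu
        rw [Finset.mem_filter] at hu
        rw [hTv] at hu
        obtain ⟨z, hz, hzz⟩ := Finset.mem_image.mp hu.2
        exact Finset.mem_image.mpr ⟨z, hz, by rw [← hzz]; abel⟩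
      have hcard : (Tu.filter (fun u => x i ∈ Tv u)).card ≤ K := by
        rw [hKdef]
        exact le_trans (Finset.card_le_card hsub) Finset.card_image_le
      calc ∑ u ∈ Tu, ∑ v ∈ Tv u, (if x i = v then h i else 0)
          = ∑ u ∈ Tu.filter (fun u => x i ∈ Tv u), h i := by
            rw [← e2]
            exact Finset.sum_congr rfl fun u _ => e1 u
        _ = ((Tu.filter (fun u => x i ∈ Tv u)).card : ℝ) * h i := by
            rw [Finset.sum_const, nsmul_eq_mul]
        _ ≤ (K:ℝ) * h i := by
            apply mul_le_mul_of_nonneg_right _ (hh0 i)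
            exact_mod_cast hcard
    calc ∑ u ∈ Tu, ∑ v ∈ Tv u, (if x i = u ∨ x i = v then h i else 0)
        ≤ ∑ u ∈ Tu, ∑ v ∈ Tv u,
          ((if x i = u then h i else 0) + (if x i = v then h i else 0)) := by
          apply Finset.sum_le_sum
          intro u _
          exact Finset.sum_le_sum fun v _ => split u v
      _ = (∑ u ∈ Tu, ∑ v ∈ Tv u, (if x i = u then h i else 0))
          + ∑ u ∈ Tu, ∑ v ∈ Tv u, (if x i = v then h i else 0) := by
          rw [← Finset.sum_add_distrib]
          exact Finset.sum_congr rfl fun u _ => Finset.sum_add_distrib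
      _ ≤ (K:ℝ) * h i + (K:ℝ) * h i := add_le_add part1 part2
      _ = (2*(K:ℝ)) * h i := by ring
  have count : ∑ u ∈ Tu, ∑ v ∈ Tv u, ∑ i ∈ I u v, h i
      ≤ (2*(K:ℝ)) * ∑ i, h i := by
    have e0 : ∀ u v, ∑ i ∈ I u v, h i
        = ∑ i : Fin n, (if x i = u ∨ x i = v then h i else 0) := by
      intro u v
      rw [hI]
      exact Finset.sum_filter _ _
    calc ∑ u ∈ Tu, ∑ v ∈ Tv u, ∑ i ∈ I u v, h i
        = ∑ u ∈ Tu, ∑ v ∈ Tv u, ∑ i : Fin n, (if x i = u ∨ x i = v then h i else 0) :=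
          Finset.sum_congr rfl fun u _ => Finset.sum_congr rfl fun v _ => e0 u v
      _ = ∑ i : Fin n, ∑ u ∈ Tu, ∑ v ∈ Tv u, (if x i = u ∨ x i = v then h i else 0) := by
          rw [Finset.sum_comm]
          exact Finset.sum_congr rfl fun u _ => Finset.sum_comm
      _ ≤ ∑ i : Fin n, (2*(K:ℝ)) * h i := Finset.sum_le_sum fun i _ => boundi i
      _ = (2*(K:ℝ)) * ∑ i, h i := by rw [Finset.mul_sum]
  have step2 : ∑ u ∈ Tu, ∑ v ∈ Tv u, F u v
      ≤ 2 * ((2*(K:ℝ)) * ∑ i, h i) := by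
    calc ∑ u ∈ Tu, ∑ v ∈ Tv u, F u v
        ≤ ∑ u ∈ Tu, ∑ v ∈ Tv u, (2 * ∑ i ∈ I u v, h i) := by
          apply Finset.sum_le_sum
          intro u _
          exact Finset.sum_le_sum fun v hv => key u v (hTvS u v hv)
      _ = 2 * ∑ u ∈ Tu, ∑ v ∈ Tv u, ∑ i ∈ I u v, h i := by
          rw [Finset.mul_sum]
          exact Finset.sum_congr rfl fun u _ => (Finset.mul_sum _ _ _).symm
      _ ≤ 2 * ((2*(K:ℝ)) * ∑ i, h i) := by linarith [count]
  have final : ∑ i, h i ≤ ∑ j, ∑ i, (Real.cosh (a₀ * θ i j) - 1) := by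
    calc ∑ i, h i = ∑ i : Fin n, ∑ j, (Real.cosh (a * θ i j) - 1) := rfl
      _ = ∑ j, ∑ i : Fin n, (Real.cosh (a * θ i j) - 1) := Finset.sum_comm
      _ ≤ ∑ j, ∑ i, (Real.cosh (a₀ * θ i j) - 1) := by
          apply Finset.sum_le_sum
          intro j _
          apply Finset.sum_le_sum
          intro i _
          have : |a| ≤ a₀ := by rw [abs_of_nonneg ha_pos.le]; exact haa0
          linarith [cosh_mono (t := θ i j) this]
  have hsumnn : 0 ≤ ∑ i, h i := Finset.sum_nonneg fun i _ => hh0 i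
  calc (1 / 2) * ∑' u, ∑' v, F u v
      = (1/2) * ∑ u ∈ Tu, ∑ v ∈ Tv u, F u v := by rw [step1]
    _ ≤ (1/2) * (2 * ((2*(K:ℝ)) * ∑ i, h i)) := by
        apply mul_le_mul_of_nonneg_left step2 (by norm_num)
    _ = (2*(K:ℝ)) * ∑ i, h i := by ring
    _ ≤ a₀ * ∑ j, ∑ i, (Real.cosh (a₀ * θ i j) - 1) :=
        mul_le_mul hKa0 final hsumnn ha0_nonneg
end
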